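/- Let w : ℤ → Fin 2 be a bi-infinite word with w(n) = w(-n) for all n (symmetric about position 0) such that every occurrence of 1 is immediately preceded by 0 (for all n, w(n) = 1 → w(n-1) = 0), and suppose w(0) = 1. Then the word obtained from w by deleting the 0 immediately before each 1 (i.e. the preimage of w under the substitution G : 1 → 01, 0 → 0) is again a palindrome, symmetric about a letter equal to 1. -/
import Mathlib


/-- The substitution G : 0 → 0, 1 → 01. -/
def G : Fin 2 → List (Fin 2)
  | 0 => [0]
  | 1 => [0, 1]

namespace Stmt9

lemma fin2 (a : Fin 2) : a = 0 ∨ a = 1 := by omega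

variable (w : ℤ → Fin 2)

/-- next block start after a block start `q`. -/
def nxt (q : ℤ) : ℤ := if w (q + 1) = 1 then q + 2 else q + 1

/-- previous block start before a block start `q`. -/
def prv (q : ℤ) : ℤ := if w (q - 1) = 1 then q - 2 else q - 1

def f : ℕ → ℤ
  | 0 => -1
  | n + 1 => nxt w (f n)

def g : ℕ → ℤ
  | 0 => -1
  | n + 1 => prv w (g n)

def p (k : ℤ) : ℤ := if 0 ≤ k then f w k.toNat else g w (-k).toNat

lemma prv_neg (hsym : ∀ n : ℤ, w n = w (-n)) (q : ℤ) :
    prv w (-q) = -nxt w q := by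
  unfold prv nxt
  rw [show -q - 1 = -(q + 1) by ring, ← hsym]
  split <;> ring

lemma w_nxt (hprec : ∀ n : ℤ, w n = 1 → w (n - 1) = 0) (q : ℤ) :
    w (nxt w q) = 0 := by
  unfold nxt
  split
  · rcases fin2 (w (q + 2)) with h | h
    · simpa using h
    · have := hprec (q + 2) h
      simp only [show q + 2 - 1 = q + 1 by ring] at this
      simp_all
  · rcases fin2 (w (q + 1)) with h | h
    · simpa using h
    · simp_all

lemma w_prv (hprec : ∀ n : ℤ, w n = 1 → w (n - 1) = 0) (q : ℤ) :
    w (prv w q) = 0 := by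
  unfold prv
  split
  · have := hprec (q - 1) (by assumption)
    simpa [show q - 1 - 1 = q - 2 by ring] using this
  · rcases fin2 (w (q - 1)) with h | h
    · simpa using h
    · simp_all

lemma nxt_prv (q : ℤ) (hq : w q = 0) : nxt w (prv w q) = q := by
  unfold prv nxt
  split
  · next h => simp [show q - 2 + 1 = q - 1 by ring, h]
  · next h =>
    simp only [show q - 1 + 1 = q by ring]
    rw [if_neg (by simp [hq])]

lemma w_neg1 (hprec : ∀ n : ℤ, w n = 1 → w (n - 1) = 0) (h0 : w 0 = 1) :
    w (-1) = 0 := by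
  have := hprec 0 h0
  simpa using this

lemma w_f (hprec : ∀ n : ℤ, w n = 1 → w (n - 1) = 0) (h0 : w 0 = 1) (n : ℕ) :
    w (f w n) = 0 := by
  cases n with
  | zero => exact w_neg1 w hprec h0
  | succ n => exact w_nxt w hprec _

lemma w_g (hprec : ∀ n : ℤ, w n = 1 → w (n - 1) = 0) (h0 : w 0 = 1) (n : ℕ) :
    w (g w n) = 0 := by
  cases n with
  | zero => exact w_neg1 w hprec h0
  | succ n => exact w_prv w hprec _

lemma w_p (hprec : ∀ n : ℤ, w n = 1 → w (n - 1) = 0) (h0 : w 0 = 1) (k : ℤ) :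
    w (p w k) = 0 := by
  unfold p
  split
  · exact w_f w hprec h0 _
  · exact w_g w hprec h0 _

lemma p_zero : p w 0 = -1 := by simp [p, f]

lemma p_succ (hprec : ∀ n : ℤ, w n = 1 → w (n - 1) = 0) (h0 : w 0 = 1) (k : ℤ) :
    p w (k + 1) = nxt w (p w k) := by
  rcases le_or_gt 0 k with hk | hk
  · rw [p, if_pos (by omega), p, if_pos hk,
      show (k + 1).toNat = k.toNat + 1 by omega]
    rfl
  · rcases eq_or_lt_of_le (show k ≤ -1 by omega) with hk1 | hk1
    · subst hk1
      rw [show (-1 : ℤ) + 1 = 0 by ring, p_zero]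
      rw [p, if_neg (by omega), show ((-(-1) : ℤ)).toNat = 1 from rfl]
      show (-1 : ℤ) = nxt w (prv w (g w 0))
      rw [show g w 0 = -1 from rfl, nxt_prv w _ (w_neg1 w hprec h0)]
    · rw [p, if_neg (by omega), p, if_neg (by omega),
        show (-k).toNat = (-(k+1)).toNat + 1 by omega]
      show g w (-(k+1)).toNat = nxt w (prv w (g w (-(k+1)).toNat))
      rw [nxt_prv w _ (w_g w hprec h0 _)]

lemma g_eq_neg_f (hsym : ∀ n : ℤ, w n = w (-n)) (h0 : w 0 = 1) (n : ℕ) :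
    g w n = -f w (n + 1) := by
  induction n with
  | zero =>
    show (-1 : ℤ) = -nxt w (-1)
    rw [nxt, show (-1 : ℤ) + 1 = 0 by ring, if_pos h0]
    ring
  | succ n ih =>
    show prv w (g w n) = -nxt w (f w (n + 1))
    rw [ih, prv_neg w hsym]

lemma p_neg (hsym : ∀ n : ℤ, w n = w (-n)) (h0 : w 0 = 1) (k : ℤ) :
    p w (-k) = -p w (k + 1) := by
  rcases lt_trichotomy k 0 with hk | hk | hk
  · rcases eq_or_lt_of_le (show k ≤ -1 by omega) with hk1 | hk1
    · subst hk1
      rw [show (-1 : ℤ) + 1 = 0 by ring, p_zero,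
        show (-(-1) : ℤ) = 1 by ring, p, if_pos (by omega),
        show ((1 : ℤ)).toNat = 1 from rfl]
      show nxt w (-1) = -(-1)
      rw [nxt, show (-1 : ℤ) + 1 = 0 by ring, if_pos h0]
      ring
    · rw [p, if_pos (by omega), p, if_neg (by omega),
        show (-k).toNat = (-(k+1)).toNat + 1 by omega,
        g_eq_neg_f w hsym h0]
      ring_nf
  · rw [hk]
    rw [show (-0 : ℤ) = 0 from rfl, p_zero, show ((0 : ℤ) + 1) = 1 from rfl,
      p, if_pos (by omega), show ((1 : ℤ)).toNat = 1 from rfl]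
    show (-1 : ℤ) = -nxt w (-1)
    rw [nxt, show (-1 : ℤ) + 1 = 0 by ring, if_pos h0]
    ring
  · rw [p, if_neg (by omega), show (-(-k) : ℤ) = k by ring,
      p, if_pos (by omega),
      show (k + 1).toNat = k.toNat + 1 by omega,
      g_eq_neg_f w hsym h0]

end Stmt9

open Stmt9 in
theorem stmt9 (w : ℤ → Fin 2)
    (hsym : ∀ n : ℤ, w n = w (-n))
    (hprec : ∀ n : ℤ, w n = 1 → w (n - 1) = 0)
    (h0 : w 0 = 1) :
    ∃ w' : ℤ → Fin 2, ∃ p : ℤ → ℤ,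
      w' 0 = 1 ∧ (∀ n : ℤ, w' n = w' (-n)) ∧
      -- w is the blockwise image of w' under G, with the image of the central letter
      -- w' 0 = 1 (whose G-image is 01) aligned so that its 1 sits at position 0 of w:
      p 0 = -1 ∧ (∀ k : ℤ, p (k + 1) = p k + (G (w' k)).length) ∧
      ∀ k : ℤ, ∀ i : ℕ, ∀ h : i < (G (w' k)).length,
        w (p k + i) = (G (w' k)).get ⟨i, h⟩ := by
  refine ⟨fun k => w (Stmt9.p w k + 1), Stmt9.p w, ?_, ?_, p_zero w, ?_, ?_⟩
  · show w (Stmt9.p w 0 + 1) = 1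
    rw [p_zero]
    simpa using h0
  · intro n
    show w (Stmt9.p w n + 1) = w (Stmt9.p w (-n) + 1)
    rw [p_neg w hsym h0, p_succ w hprec h0]
    rcases fin2 (w (Stmt9.p w n + 1)) with h | h
    · rw [h, nxt, if_neg (by simp [h])]
      rw [show -(Stmt9.p w n + 1) + 1 = -(Stmt9.p w n) by ring, ← hsym]
      exact (w_p w hprec h0 n).symm
    · rw [h, nxt, if_pos h]
      rw [show -(Stmt9.p w n + 2) + 1 = -(Stmt9.p w n + 1) by ring, ← hsym]
      exact h.symm
  · intro k
    show Stmt9.p w (k + 1) = Stmt9.p w k + (G (w (Stmt9.p w k + 1))).length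
    rw [p_succ w hprec h0, nxt]
    rcases fin2 (w (Stmt9.p w k + 1)) with h | h
    · rw [if_neg (by simp [h]), h]
      rfl
    · rw [if_pos h, h]
      rfl
  · intro k i
    show ∀ hi : i < (G (w (Stmt9.p w k + 1))).length,
        w (Stmt9.p w k + (i : ℤ)) = (G (w (Stmt9.p w k + 1))).get ⟨i, hi⟩
    rcases fin2 (w (Stmt9.p w k + 1)) with h | h
    · rw [h]
      intro hi
      have hi0 : i = 0 := by
        have := hi
        simp [G] at this
        omega
      subst hi0
      simpa [G] using w_p w hprec h0 k
    · rw [h]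
      intro hi
      have hi01 : i = 0 ∨ i = 1 := by
        have := hi
        simp [G] at this
        omega
      rcases hi01 with rfl | rfl
      · simpa [G] using w_p w hprec h0 k
      · simpa [G] using h
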